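/- In every feasible solution of the constructed instance I′, for each long leg i there is exactly one end cluster of leg i, and no cluster other than this end cluster consists solely of users lying on leg i. -/

import Mathlib

noncomputable local instance : DecidableEq ℝ := Classical.decEq ℝ

/-- The distance function on a spider with legs indexed by `Λ`. -/
noncomputable def spiderDist {Λ : Type*} [DecidableEq Λ] (P Q : Λ × ℝ) : ℝ :=
  if P.1 = Q.1 then |P.2 - Q.2| else P.2 + Q.2

/-- An instance of the arrears problem: payment duties
`S i = {(a i 0, p i 0), …, (a i (sz i), p i (sz i))}` (so `|S i| = sz i + 1`),
with strictly increasing payment dates and amounts, and budget constraints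
`(b j, q j)`, strictly increasing, all positive, with the last budget date
at least every payment date. -/
structure ArrearsInstance where
  n : ℕ
  m : ℕ
  npos : 0 < n
  mpos : 0 < m
  sz : Fin n → ℕ
  a : (i : Fin n) → Fin (sz i + 1) → ℕ
  p : (i : Fin n) → Fin (sz i + 1) → ℕ
  amono : ∀ i, StrictMono (a i)
  pmono : ∀ i, StrictMono (p i)
  apos : ∀ i k, 0 < a i k
  ppos : ∀ i k, 0 < p i k
  b : Fin m → ℕ
  q : Fin m → ℕ
  bmono : StrictMono b
  qmono : StrictMono q
  bpos : ∀ j, 0 < b j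
  qpos : ∀ j, 0 < q j
  hba : ∀ i k, a i k ≤ Finset.univ.sup b

namespace ArrearsInstance

variable (I : ArrearsInstance)

/-- `L = max(max_i a_{i,|S_i|}, b_m) + 1`. -/
def L : ℕ := ((Finset.univ.sup fun i => I.a i (Fin.last (I.sz i))) ⊔ Finset.univ.sup I.b) + 1

/-- `r = max(max_i p_{i,|S_i|}, q_m) + 1`. -/
def r : ℕ := ((Finset.univ.sup fun i => I.p i (Fin.last (I.sz i))) ⊔ Finset.univ.sup I.q) + 1

/-- `q_{j-1}`, with `q_0 = 0`. -/
def qprev (j : Fin I.m) : ℕ :=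
  if (j : ℕ) = 0 then 0 else I.q ⟨(j : ℕ) - 1, lt_of_le_of_lt (Nat.sub_le _ _) j.isLt⟩

/-- `b_{j-1}`, with `b_0 = 0`. -/
def bprev (j : Fin I.m) : ℕ :=
  if (j : ℕ) = 0 then 0 else I.b ⟨(j : ℕ) - 1, lt_of_le_of_lt (Nat.sub_le _ _) j.isLt⟩

/-- The number `q j − q (j−1)` of short legs of length `b (j−1) + 1`. -/
def qdiff (j : Fin I.m) : ℕ := I.q j - I.qprev j

/-- The legs of the spider of the constructed instance `I′`: one long leg per payment
duty, `q j − q (j−1)` short legs of length `b (j−1) + 1` for every `j`, and `r` short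
legs of length `L`. -/
def Leg : Type := Fin I.n ⊕ ((Σ j : Fin I.m, Fin (I.qdiff j)) ⊕ Fin I.r)

instance : DecidableEq I.Leg :=
  inferInstanceAs (DecidableEq (Fin I.n ⊕ ((Σ j : Fin I.m, Fin (I.qdiff j)) ⊕ Fin I.r)))

/-- The coordinate `4L − a_{i,|S_i|} + 1` of the farthest users on long leg `i`. -/
def endCoord (i : Fin I.n) : ℝ := 4 * I.L - I.a i (Fin.last (I.sz i)) + 1

/-- The coordinate `2L − a_{i,|S_i|}` of the innermost users on long leg `i`. -/
def lastCoord (i : Fin I.n) : ℝ := 2 * I.L - I.a i (Fin.last (I.sz i))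

/-- The farthest user on long leg `i`. -/
def endPt (i : Fin I.n) : I.Leg × ℝ := (Sum.inl i, I.endCoord i)

/-- The users on long leg `i`: `r` users at `4L − a_{i,|S_i|} + 1`, then
`p_{i,k+1} − p_{i,k}` users at `2L − a_{i,k}` for `k = 1, …, |S_i| − 1`, and
`r − p_{i,|S_i|}` users at `2L − a_{i,|S_i|}`. -/
def longUsers (i : Fin I.n) : Multiset (I.Leg × ℝ) :=
  Multiset.replicate I.r (I.endPt i)
  + (Finset.univ : Finset (Fin (I.sz i))).val.bind (fun k =>
      Multiset.replicate (I.p i k.succ - I.p i k.castSucc)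
        ((Sum.inl i, (2 * I.L - I.a i k.castSucc : ℝ)) : I.Leg × ℝ))
  + Multiset.replicate (I.r - I.p i (Fin.last (I.sz i)))
      ((Sum.inl i, I.lastCoord i) : I.Leg × ℝ)

/-- All users of the constructed instance `I′`: the users on the long legs, one user at
the tip of each short leg of length `b (j−1) + 1`, and one user at the tip of each of
the `r` short legs of length `L`. -/
def users : Multiset (I.Leg × ℝ) :=
  (Finset.univ : Finset (Fin I.n)).val.bind I.longUsers
  + (Finset.univ : Finset (Σ j : Fin I.m, Fin (I.qdiff j))).val.map
      (fun s => ((Sum.inr (Sum.inl s), (I.bprev s.1 + 1 : ℝ)) : I.Leg × ℝ))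
  + (Finset.univ : Finset (Fin I.r)).val.map
      (fun t => ((Sum.inr (Sum.inr t), (I.L : ℝ)) : I.Leg × ℝ))

/-- A feasible solution of `I′`: a partition of the users into clusters, each containing
at least `r` users and having diameter at most `2L`. -/
def Feasible (P : Multiset (Multiset (I.Leg × ℝ))) : Prop :=
  P.sum = I.users ∧
  ∀ C ∈ P, I.r ≤ Multiset.card C ∧ ∀ x ∈ C, ∀ y ∈ C, spiderDist x y ≤ 2 * I.L

end ArrearsInstance

/-!
All users within distance `2L` of the far end of leg `i` lie on leg `i` itself and above its
innermost coordinate `2L − a_{i,|S_i|}`: leaving leg `i` costs at least `4L − a_{i,|S_i|} + 1`,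
and the innermost users are at distance exactly `2L + 1`. Telescoping the `p_{i,k+1} − p_{i,k}`
shows that there are only `r + (p_{i,|S_i|} − p_{i,1}) < 2r` such users, so at most one cluster of
size `≥ r` can contain a farthest user. Symmetrically, the users of leg `i` other than the
farthest ones number `r − p_{i,1} < r`, too few for a cluster of their own.
-/

theorem Fin.sum_succ_tsub_castSucc {n : ℕ} {f : Fin (n + 1) → ℕ} (hf : Monotone f) :
    ∑ k : Fin n, (f k.succ - f k.castSucc) = f (Fin.last n) - f 0 := by
  induction n with
  | zero => simp
  | succ n ih =>
    have hinit := ih (f := fun k => f k.castSucc) (hf.comp Fin.strictMono_castSucc.monotone)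
    have h0 : f 0 ≤ f (Fin.last n).castSucc := hf (Fin.zero_le _)
    have h1 : f (Fin.last n).castSucc ≤ f (Fin.last (n + 1)) := hf (Fin.le_last _)
    rw [Fin.sum_univ_castSucc]
    simp only [Fin.succ_castSucc, Fin.succ_last, Fin.castSucc_zero, Nat.succ_eq_add_one]
      at hinit ⊢
    omega

section Spider

variable {Λ : Type*} [DecidableEq Λ] {P Q : Λ × ℝ}

theorem spiderDist_of_fst_eq (h : P.1 = Q.1) : spiderDist P Q = |P.2 - Q.2| := if_pos h

theorem spiderDist_of_fst_ne (h : P.1 ≠ Q.1) : spiderDist P Q = P.2 + Q.2 := if_neg h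

end Spider

namespace Multiset

variable {α : Type*}

theorem card_mul_le_card_sum {P : Multiset (Multiset α)} {r : ℕ}
    (h : ∀ C ∈ P, r ≤ card C) :
    card P * r ≤ card P.sum :=
  calc card P * r = card (P.map card) • r := by simp
    _ ≤ (P.map card).sum := card_nsmul_le_sum (by simpa using h)
    _ = card P.sum := (card_join P).symm

theorem sum_filter_le_sum (P : Multiset (Multiset α)) (p : Multiset α → Prop)
    [DecidablePred p] :
    (P.filter p).sum ≤ P.sum := by
  conv_rhs => rw [← filter_add_not p P, sum_add]
  exact le_self_add

end Multiset

namespace ArrearsInstance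

variable (I : ArrearsInstance)

theorem a_lt_L (i : Fin I.n) (k : Fin (I.sz i + 1)) : I.a i k < I.L := by
  have h₁ : I.a i k ≤ I.a i (Fin.last (I.sz i)) := (I.amono i).monotone (Fin.le_last k)
  have h₂ : I.a i (Fin.last (I.sz i)) ≤ Finset.univ.sup fun j => I.a j (Fin.last (I.sz j)) :=
    Finset.le_sup (f := fun j => I.a j (Fin.last (I.sz j))) (Finset.mem_univ i)
  exact Nat.lt_succ_of_le (h₁.trans (h₂.trans le_sup_left))

theorem p_lt_r (i : Fin I.n) (k : Fin (I.sz i + 1)) : I.p i k < I.r := by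
  have h₁ : I.p i k ≤ I.p i (Fin.last (I.sz i)) := (I.pmono i).monotone (Fin.le_last k)
  have h₂ : I.p i (Fin.last (I.sz i)) ≤ Finset.univ.sup fun j => I.p j (Fin.last (I.sz j)) :=
    Finset.le_sup (f := fun j => I.p j (Fin.last (I.sz j))) (Finset.mem_univ i)
  exact Nat.lt_succ_of_le (h₁.trans (h₂.trans le_sup_left))

def lastPt (i : Fin I.n) : I.Leg × ℝ := (Sum.inl i, I.lastCoord i)

def middleUsers (i : Fin I.n) : Multiset (I.Leg × ℝ) :=
  (Finset.univ : Finset (Fin (I.sz i))).val.bind fun k =>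
    Multiset.replicate (I.p i k.succ - I.p i k.castSucc)
      ((Sum.inl i, (2 * I.L - I.a i k.castSucc : ℝ)) : I.Leg × ℝ)

theorem longUsers_eq (i : Fin I.n) :
    I.longUsers i = Multiset.replicate I.r (I.endPt i) + I.middleUsers i
      + Multiset.replicate (I.r - I.p i (Fin.last (I.sz i))) (I.lastPt i) := rfl

theorem card_middleUsers (i : Fin I.n) :
    Multiset.card (I.middleUsers i) = I.p i (Fin.last (I.sz i)) - I.p i 0 := by
  simp only [middleUsers, Multiset.card_bind, Function.comp_def, Multiset.card_replicate]
  exact Fin.sum_succ_tsub_castSucc (I.pmono i).monotone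

theorem card_filter_longUsers_le (i : Fin I.n) (q : I.Leg × ℝ → Prop) [DecidablePred q] :
    Multiset.card ((I.longUsers i).filter q) ≤
      Multiset.card ((Multiset.replicate I.r (I.endPt i)).filter q)
        + (I.p i (Fin.last (I.sz i)) - I.p i 0)
        + Multiset.card
            ((Multiset.replicate (I.r - I.p i (Fin.last (I.sz i))) (I.lastPt i)).filter q) := by
  rw [longUsers_eq, Multiset.filter_add, Multiset.filter_add, Multiset.card_add,
    Multiset.card_add, ← card_middleUsers]
  exact Nat.add_le_add_right
    (Nat.add_le_add_left (Multiset.card_le_card (Multiset.filter_le q _)) _) _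

theorem card_filter_ne_lastPt_longUsers_lt (i : Fin I.n) :
    Multiset.card ((I.longUsers i).filter (· ≠ I.lastPt i)) < 2 * I.r := by
  have h := I.card_filter_longUsers_le i (fun x => x ≠ I.lastPt i)
  rw [Multiset.filter_eq_nil.mpr fun x hx => not_not.mpr (Multiset.eq_of_mem_replicate hx),
    Multiset.card_zero] at h
  have hend := Multiset.card_le_card
    (Multiset.filter_le (· ≠ I.lastPt i) (Multiset.replicate I.r (I.endPt i)))
  rw [Multiset.card_replicate] at hend
  have hp := I.p_lt_r i (Fin.last (I.sz i))
  have hp₀ := I.ppos i 0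
  omega

theorem card_filter_ne_endPt_longUsers_lt (i : Fin I.n) :
    Multiset.card ((I.longUsers i).filter (· ≠ I.endPt i)) < I.r := by
  have h := I.card_filter_longUsers_le i (fun x => x ≠ I.endPt i)
  rw [Multiset.filter_eq_nil.mpr fun x hx => not_not.mpr (Multiset.eq_of_mem_replicate hx),
    Multiset.card_zero] at h
  have hlast := Multiset.card_le_card (Multiset.filter_le (· ≠ I.endPt i)
    (Multiset.replicate (I.r - I.p i (Fin.last (I.sz i))) (I.lastPt i)))
  rw [Multiset.card_replicate] at hlast
  have hp := I.p_lt_r i (Fin.last (I.sz i))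
  have hp₀ := I.ppos i 0
  have hmono : I.p i 0 ≤ I.p i (Fin.last (I.sz i)) := (I.pmono i).monotone (Fin.zero_le _)
  omega

theorem fst_eq_and_coord_nonneg_of_mem_longUsers {i : Fin I.n} {x : I.Leg × ℝ}
    (hx : x ∈ I.longUsers i) : x.1 = Sum.inl i ∧ 0 ≤ x.2 := by
  have ha : ∀ k, (I.a i k : ℝ) ≤ I.L := fun k => by exact_mod_cast (I.a_lt_L i k).le
  simp only [longUsers, endPt, endCoord, lastCoord, Multiset.mem_add, Multiset.mem_bind,
    Multiset.mem_replicate, Finset.mem_val, Finset.mem_univ, true_and] at hx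
  rcases hx with (⟨-, rfl⟩ | ⟨k, -, rfl⟩) | ⟨-, rfl⟩
  · exact ⟨rfl, by linarith [ha (Fin.last _)]⟩
  · exact ⟨rfl, by linarith [ha k.castSucc]⟩
  · exact ⟨rfl, by linarith [ha (Fin.last _)]⟩

theorem coord_nonneg_of_mem_users {x : I.Leg × ℝ} (hx : x ∈ I.users) : 0 ≤ x.2 := by
  simp only [users, Multiset.mem_add, Multiset.mem_bind, Multiset.mem_map,
    Finset.mem_val, Finset.mem_univ, true_and] at hx
  rcases hx with (⟨j, hj⟩ | ⟨s, rfl⟩) | ⟨t, rfl⟩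
  · exact (I.fst_eq_and_coord_nonneg_of_mem_longUsers hj).2
  all_goals positivity

theorem le_longUsers_of_le_users {i : Fin I.n} {C : Multiset (I.Leg × ℝ)} (hC : C ≤ I.users)
    (hleg : ∀ x ∈ C, x.1 = Sum.inl i) : C ≤ I.longUsers i := by
  classical
  have hfilter : I.users.filter (fun x => x.1 = Sum.inl i) = I.longUsers i := by
    have hother : ∀ j ≠ i, (I.longUsers j).filter (fun x => x.1 = Sum.inl i) = 0 := fun j hji =>
      Multiset.filter_eq_nil.mpr fun x hx hxi =>
        hji (Sum.inl_injective ((I.fst_eq_and_coord_nonneg_of_mem_longUsers hx).1.symm.trans hxi))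
    have hself : (I.longUsers i).filter (fun x => x.1 = Sum.inl i) = I.longUsers i :=
      Multiset.filter_eq_self.mpr fun x hx => (I.fst_eq_and_coord_nonneg_of_mem_longUsers hx).1
    have hbind : (Finset.univ.val.bind fun j => (I.longUsers j).filter (fun x => x.1 = Sum.inl i))
        = ∑ j, (I.longUsers j).filter (fun x => x.1 = Sum.inl i) := rfl
    simp only [users, Multiset.filter_add, Multiset.filter_bind, hbind,
      Finset.sum_eq_single_of_mem i (Finset.mem_univ i) fun j _ => hother j, hself]
    rw [Multiset.filter_eq_nil.mpr, Multiset.filter_eq_nil.mpr, add_zero, add_zero]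
    all_goals
      intro x hx
      obtain ⟨_, -, rfl⟩ := Multiset.mem_map.mp hx
      exact Sum.inr_ne_inl
  exact hfilter ▸ Multiset.le_filter.mpr ⟨hC, hleg⟩

theorem eq_inl_and_ne_lastPt_of_spiderDist_endPt_le {i : Fin I.n} {x : I.Leg × ℝ}
    (hx : x ∈ I.users) (hd : spiderDist x (I.endPt i) ≤ 2 * I.L) :
    x.1 = Sum.inl i ∧ x ≠ I.lastPt i := by
  have ha : (I.a i (Fin.last (I.sz i)) : ℝ) < I.L := Nat.cast_lt.mpr (I.a_lt_L i _)
  have hx₀ := I.coord_nonneg_of_mem_users hx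
  by_cases hleg : x.1 = Sum.inl i
  · refine ⟨hleg, fun hlast => ?_⟩
    rw [spiderDist_of_fst_eq hleg, abs_le, hlast] at hd
    simp only [lastPt, lastCoord, endPt, endCoord] at hd
    linarith [hd.1]
  · rw [spiderDist_of_fst_ne hleg] at hd
    simp only [endPt, endCoord] at hd
    linarith

theorem endPt_mem_users (i : Fin I.n) : I.endPt i ∈ I.users := by
  have hmem : I.endPt i ∈ I.longUsers i := by
    rw [longUsers_eq]
    exact Multiset.mem_add.mpr (.inl (Multiset.mem_add.mpr (.inl
      (Multiset.mem_replicate.mpr ⟨Nat.succ_ne_zero _, rfl⟩))))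
  exact Multiset.mem_add.mpr (.inl (Multiset.mem_add.mpr (.inl
    (Multiset.mem_bind.mpr ⟨i, Finset.mem_univ i, hmem⟩))))

namespace Feasible

variable {I : ArrearsInstance} {P : Multiset (Multiset (I.Leg × ℝ))}

theorem le_users (hP : I.Feasible P) {C : Multiset (I.Leg × ℝ)} (hC : C ∈ P) : C ≤ I.users :=
  hP.1 ▸ Multiset.le_sum_of_mem hC

theorem exists_endPt_mem (hP : I.Feasible P) (i : Fin I.n) : ∃ C ∈ P, I.endPt i ∈ C :=
  Multiset.mem_join.mp (by rw [Multiset.join, hP.1]; exact I.endPt_mem_users i)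

theorem countP_endPt_mem_lt_two (hP : I.Feasible P) (i : Fin I.n) :
    (P.countP fun C => I.endPt i ∈ C) < 2 := by
  rw [Multiset.countP_eq_card_filter]
  set E := P.filter fun C => I.endPt i ∈ C
  have hnear : ∀ x ∈ E.sum, x.1 = Sum.inl i ∧ x ≠ I.lastPt i := by
    intro x hx
    obtain ⟨C, hC, hxC⟩ := Multiset.mem_join.mp hx
    obtain ⟨hCP, hendC⟩ := Multiset.mem_filter.mp hC
    exact I.eq_inl_and_ne_lastPt_of_spiderDist_endPt_le (Multiset.mem_of_le (hP.le_users hCP) hxC)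
      ((hP.2 C hCP).2 x hxC _ hendC)
  have hEsum : E.sum ≤ I.longUsers i :=
    I.le_longUsers_of_le_users (hP.1 ▸ Multiset.sum_filter_le_sum P _) fun x hx => (hnear x hx).1
  refine Nat.lt_of_mul_lt_mul_right (a := I.r) ?_
  calc Multiset.card E * I.r ≤ Multiset.card E.sum :=
        Multiset.card_mul_le_card_sum fun C hC => (hP.2 C (Multiset.mem_of_mem_filter hC)).1
    _ ≤ Multiset.card ((I.longUsers i).filter (· ≠ I.lastPt i)) :=
        Multiset.card_le_card (Multiset.le_filter.mpr ⟨hEsum, fun x hx => (hnear x hx).2⟩)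
    _ < 2 * I.r := I.card_filter_ne_lastPt_longUsers_lt i

theorem endPt_mem_of_forall_fst_eq (hP : I.Feasible P) {i : Fin I.n}
    {C : Multiset (I.Leg × ℝ)} (hC : C ∈ P) (hleg : ∀ x ∈ C, x.1 = Sum.inl i) :
    I.endPt i ∈ C := by
  by_contra hend
  have hoff : C ≤ (I.longUsers i).filter (· ≠ I.endPt i) :=
    Multiset.le_filter.mpr ⟨I.le_longUsers_of_le_users (hP.le_users hC) hleg,
      fun x hx hx' => hend (hx' ▸ hx)⟩
  exact (((hP.2 C hC).1.trans (Multiset.card_le_card hoff)).trans_lt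
    (I.card_filter_ne_endPt_longUsers_lt i)).false

end Feasible

end ArrearsInstance

/-- In every feasible solution of the constructed instance `I′`, for each long leg `i`
there is exactly one end cluster of leg `i` (counted with multiplicity), and no cluster
other than this end cluster consists solely of users lying on leg `i`. -/
theorem end_cluster_unique (I : ArrearsInstance)
    (P : Multiset (Multiset (I.Leg × ℝ))) (hP : I.Feasible P) :
    ∀ i : Fin I.n,
      (P.countP fun C => I.endPt i ∈ C) = 1 ∧
      ∀ C ∈ P, (∀ x ∈ C, x.1 = Sum.inl i) → I.endPt i ∈ C := by
  intro i
  refine ⟨?_, fun C hC hleg => hP.endPt_mem_of_forall_fst_eq hC hleg⟩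
  obtain ⟨C, hC, hendC⟩ := hP.exists_endPt_mem i
  have hpos : 0 < P.countP fun C => I.endPt i ∈ C := Multiset.countP_pos.mpr ⟨C, hC, hendC⟩
  have hlt := hP.countP_endPt_mem_lt_two i
  omega
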